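/- Let n ≥ 1 and let ζ ∈ ℂ be a primitive (2n+2)-th root of unity, and set x_k = ζ^k for k = 1, …, n. Then x_k ≠ 1 and x_k ≠ −1 for all k; for all k < l both x_k ≠ x_l and x_k · x_l ≠ 1; and (x_1 · x_2 ⋯ x_n)^{n+1} = (−1)^{n(n+1)/2}. -/

import Mathlib

/-!
Since `ζ` has order `2n + 2`, the power `ζ ^ (n + 1)` is a square root of unity other than `1`,
hence equals `-1`. Every other claim compares two exponents in `[1, 2n + 1]`, where `ζ ^ a = ζ ^ b`
forces `a = b`. Finally `x_1 ⋯ x_n = ζ ^ (n(n+1)/2)`, so its `(n+1)`-st power is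
`(ζ ^ (n + 1)) ^ (n(n+1)/2) = (-1) ^ (n(n+1)/2)`.
-/

theorem Finset.sum_Icc_id_mul_two (n : ℕ) : (∑ i ∈ Finset.Icc 1 n, i) * 2 = n * (n + 1) := by
  induction n with
  | zero => simp
  | succ n ih =>
    rw [Finset.sum_Icc_succ_top (by omega), add_mul, ih]
    ring

theorem Finset.sum_Icc_id (n : ℕ) : ∑ i ∈ Finset.Icc 1 n, i = n * (n + 1) / 2 := by
  have := Finset.sum_Icc_id_mul_two n
  omega

theorem IsPrimitiveRoot.pow_eq_neg_one {R : Type*} [CommRing R] [IsDomain R] {ζ : R} {m : ℕ}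
    (hζ : IsPrimitiveRoot ζ (2 * m)) (hm : m ≠ 0) : ζ ^ m = -1 :=
  (hζ.pow (by omega) (mul_comm 2 m)).eq_neg_one_of_two_right

theorem stmt11_general (n : ℕ) (ζ : ℂ) (hζ : IsPrimitiveRoot ζ (2 * n + 2)) :
    (∀ k, 1 ≤ k → k ≤ n → ζ ^ k ≠ 1 ∧ ζ ^ k ≠ -1) ∧
    (∀ k l, 1 ≤ k → k < l → l ≤ n → ζ ^ k ≠ ζ ^ l ∧ ζ ^ k * ζ ^ l ≠ 1) ∧
    (∏ k ∈ Finset.Icc 1 n, ζ ^ k) ^ (n + 1) = (-1 : ℂ) ^ (n * (n + 1) / 2) := by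
  have hneg : ζ ^ (n + 1) = -1 :=
    IsPrimitiveRoot.pow_eq_neg_one (by rwa [mul_add, mul_one]) n.succ_ne_zero
  refine ⟨fun k hk hkn => ⟨?_, ?_⟩, fun k l hk hkl hln => ⟨?_, ?_⟩, ?_⟩
  · exact hζ.pow_ne_one_of_pos_of_lt (by omega) (by omega)
  · rw [← hneg]
    exact fun h => absurd (hζ.pow_inj (by omega) (by omega) h) (by omega)
  · exact fun h => absurd (hζ.pow_inj (by omega) (by omega) h) (by omega)
  · rw [← pow_add]
    exact hζ.pow_ne_one_of_pos_of_lt (by omega) (by omega)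
  · rw [Finset.prod_pow_eq_pow_sum, Finset.sum_Icc_id, ← pow_mul, mul_comm, pow_mul, hneg]

/-- Verification of condition (⋆) for type `C_n`, last simple root: with `ζ` a primitive
`(2n+2)`-th root of unity and `x_k = ζ^k` (`1 ≤ k ≤ n`), one has `x_k ≠ ±1`, the `x_k`
are pairwise distinct with `x_k x_l ≠ 1`, and `(x_1 ⋯ x_n)^{n+1} = (−1)^{n(n+1)/2}`. -/
theorem stmt11 (n : ℕ) (hn : 1 ≤ n) (ζ : ℂ) (hζ : IsPrimitiveRoot ζ (2 * n + 2)) :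
    (∀ k, 1 ≤ k → k ≤ n → ζ ^ k ≠ 1 ∧ ζ ^ k ≠ -1) ∧
    (∀ k l, 1 ≤ k → k < l → l ≤ n → ζ ^ k ≠ ζ ^ l ∧ ζ ^ k * ζ ^ l ≠ 1) ∧
    (∏ k ∈ Finset.Icc 1 n, ζ ^ k) ^ (n + 1) = (-1 : ℂ) ^ (n * (n + 1) / 2) :=
  stmt11_general n ζ hζ
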